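/- Let m > 1 and 2 ≤ N ≤ m, and assume (H1). Let u be a radial solution on [0,R). Then (N−m)u(r) + (m−1) r u'(r) → 0 as r → R; moreover, if r_b ∈ (0,R) satisfies u(r_b) = b, then (N−m)b + (m−1) r_b u'(r_b) ≤ 0. (In terms of the inverse function r = r(u) of u, this says A(u) = (N−m)u + (m−1) r(u)/r'(u) satisfies A(u) → 0 as u → 0⁺ and A(b) ≤ 0.) -/

import Mathlib

open Filter Set MeasureTheory intervalIntegral

noncomputable section

/-- The half-open interval `[0, R)` inside `ℝ`, where `R : EReal` may be `∞`. -/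
def domR (R : EReal) : Set ℝ := {r : ℝ | 0 ≤ r ∧ (r : EReal) < R}

/-- The filter describing `r → R⁻` inside `ℝ` (it equals `atTop` when `R = ∞`). -/
def limR (R : EReal) : Filter ℝ := Filter.comap Real.toEReal (nhdsWithin R (Set.Iio R))

/-- Assumption (H1): `f` is continuous on `(0,∞)`, nonpositive on `(0,b]` and
positive on `(b,∞)`, with `b > 0`. -/
def H1cond (b : ℝ) (f : ℝ → ℝ) : Prop :=
  0 < b ∧ ContinuousOn f (Set.Ioi 0) ∧
    (∀ u : ℝ, 0 < u → u ≤ b → f u ≤ 0) ∧ (∀ u : ℝ, b < u → 0 < f u)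

/-- `u` (with derivative `u'`) is a radial solution on `[0, R)` of
`(r^{N-1} |u'|^{m-2} u')' = - r^{N-1} f(u)`, positive, `C¹` up to the origin,
with `u'(0) = 0` and `u, u' → 0` as `r → R`. -/
def IsRadialSolution (N : ℕ) (m : ℝ) (f : ℝ → ℝ) (R : EReal) (u u' : ℝ → ℝ) : Prop :=
  0 < R ∧
  (∀ r ∈ domR R, HasDerivWithinAt u (u' r) (domR R) r) ∧
  ContinuousOn u' (domR R) ∧
  (∀ r ∈ domR R, 0 < u r) ∧
  u' 0 = 0 ∧
  (∀ r : ℝ, 0 < r → (r : EReal) < R →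
    HasDerivAt (fun s : ℝ => s ^ (N - 1) * |u' s| ^ (m - 2) * u' s)
      (-(r ^ (N - 1) * f (u r))) r) ∧
  Filter.Tendsto u (limR R) (nhds 0) ∧
  Filter.Tendsto u' (limR R) (nhds 0)

/-- `rr` is the (strictly decreasing) inverse on `(0, α)` of a radial solution `u`,
with derivatives `rr'`, `rr''`, satisfying the transformed ODE
`(m-1) r'' = (N-1) r'²/r + f(u) |r'|^m r'`. -/
def IsInvSol (N : ℕ) (m α : ℝ) (f : ℝ → ℝ) (R : EReal) (u rr rr' rr'' : ℝ → ℝ) : Prop :=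
  (∀ v ∈ Set.Ioo 0 α,
    0 < rr v ∧ (rr v : EReal) < R ∧ u (rr v) = v ∧
    HasDerivAt rr (rr' v) v ∧ rr' v < 0 ∧ HasDerivAt rr' (rr'' v) v ∧
    (m - 1) * rr'' v = ((N : ℝ) - 1) * (rr' v) ^ 2 / rr v + f v * |rr' v| ^ m * rr' v) ∧
  (∀ x : ℝ, 0 < x → (x : EReal) < R → ∃ v ∈ Set.Ioo 0 α, rr v = x)

/-- The function `ω(u) = r(u)^{N-1} / (r'(u) |r'(u)|^{m-2})`. -/
def omegaF (N : ℕ) (m : ℝ) (rr rr' : ℝ → ℝ) (v : ℝ) : ℝ :=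
  rr v ^ (N - 1) / (rr' v * |rr' v| ^ (m - 2))

/-- The function `P(u) = a u ω(u) + r(u)^N ((m-1)/m · 1/|r'(u)|^m + (a/N) u f(u))`. -/
def PF (N : ℕ) (m a : ℝ) (f rr rr' : ℝ → ℝ) (v : ℝ) : ℝ :=
  a * v * omegaF N m rr rr' v +
    rr v ^ N * ((m - 1) / m * (1 / |rr' v| ^ m) + a / (N : ℝ) * v * f v)


/-!
Since `u → 0`, everything reduces to the sign of `u'` below level `b` and to `r u'(r) → 0`, which
is immediate when `R < ∞`. With `F' = f`, the energy `(m-1)/m |u'|^m + F(u)` has derivative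
`-(N-1) |u'|^m / r ≤ 0`, and `F` decreases on `(0, b]`; so at a critical point of level `≤ b` the
energy would be at most its value further out, where `u` is smaller, hence constant in between;
then `u' = 0` there and `u` could not decrease. Thus whenever `u(ρ) ≤ b`, `u` is minimal on
`[0, ρ]` at `ρ`, and `u'(ρ) ≤ 0`. For `R = ∞`, once `u < b` the flux `r^{N-1} φ_m(u')` is nonpositive and increasing, so `u'`
increases, and the mean value theorem on `[t/2, t]` gives `0 ≤ -t u'(t) ≤ 2 u(t/2) → 0`.
-/

open scoped Topology

/-- `φ_m`, the nonlinearity of the `m`-Laplacian. -/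
def phi (m x : ℝ) : ℝ := |x| ^ (m - 2) * x

/-- `F` is meant to be a primitive of `f`. -/
def energy (m : ℝ) (F u u' : ℝ → ℝ) (r : ℝ) : ℝ := (m - 1) / m * |u' r| ^ m + F (u r)

section Phi

variable {m : ℝ}

lemma phi_neg (x : ℝ) : phi m (-x) = -phi m x := by
  simp [phi]

lemma phi_nonpos {x : ℝ} (hx : x ≤ 0) : phi m x ≤ 0 :=
  mul_nonpos_of_nonneg_of_nonpos (by positivity) hx

lemma abs_phi (hm : m ≠ 1) (x : ℝ) : |phi m x| = |x| ^ (m - 1) := by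
  rcases eq_or_ne x 0 with rfl | hx
  · simp [phi, sub_ne_zero.2 hm]
  · rw [phi, abs_mul, abs_of_nonneg (by positivity), ← Real.rpow_add_one (abs_ne_zero.2 hx)]
    ring_nf

lemma mul_phi (hm : m ≠ 0) (x : ℝ) : x * phi m x = |x| ^ m := by
  rcases eq_or_ne x 0 with rfl | hx
  · simp [phi, hm]
  · rw [phi, mul_left_comm, ← abs_mul_abs_self, ← mul_assoc,
      ← Real.rpow_add_one (abs_ne_zero.2 hx), ← Real.rpow_add_one (abs_ne_zero.2 hx)]
    ring_nf

lemma phi_strictMono (hm : 1 < m) : StrictMono (phi m) := by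
  refine strictMono_of_odd_strictMonoOn_nonneg phi_neg fun x hx y hy hxy => ?_
  have phi_of_nonneg : ∀ z : ℝ, 0 ≤ z → phi m z = z ^ (m - 1) := fun z hz => by
    have hphi : 0 ≤ phi m z := mul_nonneg (by positivity) hz
    rw [← abs_of_nonneg hphi, abs_phi hm.ne', abs_of_nonneg hz]
  rw [phi_of_nonneg x hx, phi_of_nonneg y hy]
  exact Real.rpow_lt_rpow hx hxy (by linarith)

lemma phi_conj_phi (hm : m ≠ 1) (x : ℝ) : phi (m / (m - 1)) (phi m x) = x := by
  rcases eq_or_ne x 0 with rfl | hx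
  · simp [phi]
  · have hm' : m - 1 ≠ 0 := sub_ne_zero.2 hm
    have hexp : (m - 1) * (m / (m - 1) - 2) + (m - 2) = 0 := by field_simp; ring
    rw [phi, abs_phi hm, ← Real.rpow_mul (abs_nonneg x), phi, ← mul_assoc,
      ← Real.rpow_add (abs_pos.2 hx), hexp, Real.rpow_zero, one_mul]

lemma abs_rpow_eq_abs_phi_rpow (hm : m ≠ 1) (x : ℝ) : |x| ^ m = |phi m x| ^ (m / (m - 1)) := by
  rw [abs_phi hm, ← Real.rpow_mul (abs_nonneg x), mul_div_cancel₀ _ (sub_ne_zero.2 hm)]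

end Phi

section Domain

variable {R : EReal}

lemma limR_top : limR ⊤ = atTop := by
  have h : Iio (⊤ : EReal) = {⊤}ᶜ := by ext x; simp [lt_top_iff_ne_top]
  rw [limR, h, EReal.nhdsWithin_top, comap_map EReal.coe_injective]

lemma limR_coe (x : ℝ) : limR x = 𝓝[<] x := by
  rw [limR, nhdsWithin, nhdsWithin, comap_inf, comap_principal, EReal.nhds_coe,
    comap_map EReal.coe_injective]
  congr 2
  ext y
  exact EReal.coe_lt_coe_iff

lemma limR_neBot (hR : 0 < R) : (limR R).NeBot := by
  induction R with
  | bot => simp at hR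
  | coe x => rw [limR_coe]; infer_instance
  | top => rw [limR_top]; infer_instance

lemma ordConnected_domR : (domR R).OrdConnected :=
  ⟨fun _ hx _ hy _ hz => ⟨hx.1.trans hz.1, (EReal.coe_le_coe_iff.2 hz.2).trans_lt hy.2⟩⟩

lemma domR_mem_nhds {r : ℝ} (hr : 0 < r) (hrR : (r : EReal) < R) : domR R ∈ 𝓝 r :=
  inter_mem (Ici_mem_nhds hr) ((isOpen_Iio.preimage continuous_coe_real_ereal).mem_nhds hrR)

lemma pos_of_mem_interior_domR {r : ℝ} (hr : r ∈ interior (domR R)) : 0 < r := by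
  have : r ∈ interior (Ici (0 : ℝ)) := interior_mono (fun _ hx => hx.1) hr
  rwa [interior_Ici] at this

lemma eventually_gt_mem_domR {s : ℝ} (hs : s ∈ domR R) : ∀ᶠ r in limR R, s < r ∧ r ∈ domR R := by
  induction R with
  | bot => exact absurd hs.2 (by simp)
  | coe x =>
    rw [limR_coe]
    filter_upwards [Ioo_mem_nhdsLT (EReal.coe_lt_coe_iff.1 hs.2)] with r hr
    exact ⟨hr.1, hs.1.trans hr.1.le, EReal.coe_lt_coe_iff.2 hr.2⟩
  | top =>
    rw [limR_top]
    filter_upwards [eventually_gt_atTop s] with r hr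
    exact ⟨hr, hs.1.trans hr.le, EReal.coe_lt_top r⟩

end Domain

lemma exists_hasDerivAt_of_continuousOn_Ioi {f : ℝ → ℝ} (hf : ContinuousOn f (Ioi 0)) :
    ∃ F : ℝ → ℝ, ∀ t, 0 < t → HasDerivAt F (f t) t := by
  refine ⟨fun t => ∫ s in (1 : ℝ)..t, f s, fun t ht => integral_hasDerivAt_right ?_
    (hf.stronglyMeasurableAtFilter isOpen_Ioi t ht) (hf.continuousAt (Ioi_mem_nhds ht))⟩
  exact (hf.mono fun x hx => lt_of_lt_of_le (lt_min one_pos ht) hx.1).intervalIntegrable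

lemma antitoneOn_Ioc_of_hasDerivAt {f F : ℝ → ℝ} (hF : ∀ t, 0 < t → HasDerivAt F (f t) t) {b : ℝ}
    (hfb : ∀ v, 0 < v → v ≤ b → f v ≤ 0) : AntitoneOn F (Ioc 0 b) := by
  refine antitoneOn_of_hasDerivWithinAt_nonpos (f' := f) (convex_Ioc 0 b)
    (fun t ht => (hF t ht.1).continuousAt.continuousWithinAt) (fun t ht => ?_) fun t ht => ?_
  all_goals rw [interior_Ioc] at ht
  · exact (hF t ht.1).hasDerivWithinAt
  · exact hfb t ht.1 ht.2.le

namespace IsRadialSolution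

variable {N : ℕ} {m : ℝ} {f : ℝ → ℝ} {u u' : ℝ → ℝ}

section

variable {R : EReal} (hu : IsRadialSolution N m f R u u')
include hu

lemma pos {r : ℝ} (hr : r ∈ domR R) : 0 < u r := hu.2.2.2.1 r hr

lemma tendsto_zero : Tendsto u (limR R) (𝓝 0) := hu.2.2.2.2.2.2.1

lemma hasDerivAt {r : ℝ} (hr : 0 < r) (hrR : (r : EReal) < R) : HasDerivAt u (u' r) r :=
  (hu.2.1 r ⟨hr.le, hrR⟩).hasDerivAt (domR_mem_nhds hr hrR)

lemma continuousOn : ContinuousOn u (domR R) :=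
  fun r hr => (hu.2.1 r hr).continuousWithinAt

lemma hasDerivAt_flux {r : ℝ} (hr : 0 < r) (hrR : (r : EReal) < R) :
    HasDerivAt (fun s => s ^ (N - 1) * phi m (u' s)) (-(r ^ (N - 1) * f (u r))) r := by
  simpa only [phi, mul_assoc] using hu.2.2.2.2.2.1 r hr hrR

lemma hasDerivAt_phi_deriv (hN : 1 ≤ N) {r : ℝ} (hr : 0 < r) (hrR : (r : EReal) < R) :
    HasDerivAt (fun s => phi m (u' s)) (-f (u r) - (N - 1) / r * phi m (u' r)) r := by
  obtain ⟨n, rfl⟩ : ∃ n, N = n + 1 := ⟨N - 1, by omega⟩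
  have hdiv := (hu.hasDerivAt_flux hr hrR).div (hasDerivAt_pow n r) (pow_ne_zero n hr.ne')
  simp only [Nat.add_sub_cancel] at hdiv
  have hpow : (n : ℝ) * r ^ (n - 1) * r = n * r ^ n := by
    cases n <;> simp [pow_succ, mul_assoc]
  refine (hdiv.congr_of_eventuallyEq ?_).congr_deriv ?_
  · filter_upwards [lt_mem_nhds hr] with s hs
    simp only [Pi.div_apply]
    field_simp
  · push_cast
    field_simp
    linear_combination -phi m (u' r) * hpow

lemma hasDerivAt_energy (hm : 1 < m) (hN : 1 ≤ N) {F : ℝ → ℝ}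
    (hF : ∀ t, 0 < t → HasDerivAt F (f t) t) {r : ℝ} (hr : 0 < r) (hrR : (r : EReal) < R) :
    HasDerivAt (energy m F u u') (-((N - 1) * |u' r| ^ m / r)) r := by
  have hm1 : 0 < m - 1 := by linarith
  have hconj : 1 < m / (m - 1) := (one_lt_div hm1).2 (by linarith)
  have hE := (((hasDerivAt_abs_rpow _ hconj).comp r (hu.hasDerivAt_phi_deriv hN hr hrR)).const_mul
    ((m - 1) / m)).add ((hF _ (hu.pos ⟨hr.le, hrR⟩)).comp r (hu.hasDerivAt hr hrR))
  -- only `φ_m(u')` is known to be differentiable, so `|u'|^m` is differentiated as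
  -- `|φ_m(u')|^{m/(m-1)}`
  have hEeq :
      energy m F u u' = fun s => (m - 1) / m * |phi m (u' s)| ^ (m / (m - 1)) + F (u s) := by
    funext s
    rw [energy, abs_rpow_eq_abs_phi_rpow hm.ne']
  rw [hEeq]
  refine hE.congr_deriv ?_
  have hinv : |phi m (u' r)| ^ (m / (m - 1) - 2) * phi m (u' r) = u' r := phi_conj_phi hm.ne' _
  rw [mul_assoc (m / (m - 1)), hinv, ← mul_phi (by linarith : m ≠ 0)]
  field_simp
  ring

lemma continuousOn_energy (hm : 1 < m) {F : ℝ → ℝ} (hF : ∀ t, 0 < t → HasDerivAt F (f t) t) :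
    ContinuousOn (energy m F u u') (domR R) := by
  refine ContinuousOn.add ?_ fun r hr => ?_
  · exact continuousOn_const.mul ((continuous_abs.rpow_const fun _ => Or.inr (by linarith)
      ).comp_continuousOn hu.2.2.1)
  · exact (hF _ (hu.pos hr)).continuousAt.comp_continuousWithinAt (hu.continuousOn r hr)

lemma antitoneOn_energy (hm : 1 < m) (hN : 1 ≤ N) {F : ℝ → ℝ}
    (hF : ∀ t, 0 < t → HasDerivAt F (f t) t) : AntitoneOn (energy m F u u') (domR R) := by
  have hint : ∀ r ∈ interior (domR R), 0 < r ∧ (r : EReal) < R := fun r hr =>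
    ⟨pos_of_mem_interior_domR hr, (interior_subset hr : r ∈ domR R).2⟩
  refine antitoneOn_of_hasDerivWithinAt_nonpos (f' := fun r => -((N - 1) * |u' r| ^ m / r))
    ordConnected_domR.convex (hu.continuousOn_energy hm hF) (fun r hr => ?_) fun r hr => ?_
  · exact (hu.hasDerivAt_energy hm hN hF (hint r hr).1 (hint r hr).2).hasDerivWithinAt
  · have hN1 : (0 : ℝ) ≤ N - 1 := sub_nonneg.2 (by exact_mod_cast hN)
    have := (hint r hr).1
    exact neg_nonpos.2 (by positivity)

lemma eq_of_energy_le (hm : 1 < m) (hN : 2 ≤ N) {F : ℝ → ℝ}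
    (hF : ∀ t, 0 < t → HasDerivAt F (f t) t) {σ r₀ : ℝ} (hσ : σ ∈ domR R) (hr₀ : r₀ ∈ domR R)
    (hσr₀ : σ < r₀) (hE : energy m F u u' σ ≤ energy m F u u' r₀) : u r₀ = u σ := by
  set E := energy m F u u'
  have hsub : Icc σ r₀ ⊆ domR R := ordConnected_domR.out hσ hr₀
  have hEanti := hu.antitoneOn_energy hm (by omega) hF
  have hE_const : ∀ x ∈ Icc σ r₀, E x = E σ := fun x hx =>
    le_antisymm (hEanti hσ (hsub hx) hx.1) (hE.trans (hEanti (hsub hx) hr₀ hx.2))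
  have hN1 : (N : ℝ) - 1 ≠ 0 := by
    have : (2 : ℝ) ≤ N := by exact_mod_cast hN
    linarith
  have hu'_zero : ∀ x ∈ Ioo σ r₀, u' x = 0 := by
    intro x hx
    have hx0 : 0 < x := hσ.1.trans_lt hx.1
    have hE0 : HasDerivAt E 0 x := (hasDerivAt_const x (E σ)).congr_of_eventuallyEq
      (eventuallyEq_of_mem (Icc_mem_nhds hx.1 hx.2) hE_const)
    have hval := (hu.hasDerivAt_energy hm (by omega) hF hx0
      (hsub (Ioo_subset_Icc_self hx)).2).unique hE0
    simp only [neg_eq_zero, div_eq_zero_iff, mul_eq_zero, hN1, hx0.ne', or_false, false_or] at hval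
    exact abs_eq_zero.1 ((Real.rpow_eq_zero (abs_nonneg _) (by linarith)).1 hval)
  obtain ⟨c, hc, hslope⟩ := exists_hasDerivAt_eq_slope u u' hσr₀ (hu.continuousOn.mono hsub)
    fun x hx => hu.hasDerivAt (hσ.1.trans_lt hx.1) (hsub (Ioo_subset_Icc_self hx)).2
  rw [hu'_zero c hc, eq_comm, div_eq_zero_iff, sub_eq_zero, sub_eq_zero] at hslope
  exact hslope.resolve_right hσr₀.ne'

lemma deriv_ne_zero_of_le (hm : 1 < m) (hN : 2 ≤ N) {b : ℝ} (hfc : ContinuousOn f (Ioi 0))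
    (hfb : ∀ v, 0 < v → v ≤ b → f v ≤ 0) {σ : ℝ} (hσ : σ ∈ domR R) (hσb : u σ ≤ b) :
    u' σ ≠ 0 := by
  intro hσ'
  obtain ⟨F, hF⟩ := exists_hasDerivAt_of_continuousOn_Ioi hfc
  have huσ : 0 < u σ := hu.pos hσ
  have := limR_neBot hu.1
  obtain ⟨r₀, ⟨hσr₀, hr₀⟩, hur₀⟩ := ((eventually_gt_mem_domR hσ).and
    (hu.tendsto_zero.eventually (gt_mem_nhds huσ))).exists
  refine hur₀.ne (hu.eq_of_energy_le hm hN hF hσ hr₀ hσr₀ ?_)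
  calc energy m F u u' σ = F (u σ) := by simp [energy, hσ', Real.zero_rpow (by linarith : m ≠ 0)]
    _ ≤ F (u r₀) := antitoneOn_Ioc_of_hasDerivAt hF hfb ⟨hu.pos hr₀, hur₀.le.trans hσb⟩
      ⟨huσ, hσb⟩ hur₀.le
    _ ≤ energy m F u u' r₀ := le_add_of_nonneg_left (by positivity)

lemma le_of_le_of_mem_Icc (hm : 1 < m) (hN : 2 ≤ N) {b : ℝ} (hfc : ContinuousOn f (Ioi 0))
    (hfb : ∀ v, 0 < v → v ≤ b → f v ≤ 0) {ρ : ℝ} (hρ : ρ ∈ domR R) (hρb : u ρ ≤ b) {x : ℝ}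
    (hx : x ∈ Icc 0 ρ) : u ρ ≤ u x := by
  by_contra! hxρ
  have hsub : Icc 0 ρ ⊆ domR R := ordConnected_domR.out ⟨le_rfl, hu.1⟩ hρ
  obtain ⟨σ, hσ, hmin⟩ := isCompact_Icc.exists_isMinOn ⟨x, hx⟩ (hu.continuousOn.mono hsub)
  have hσρ : σ < ρ := hσ.2.lt_of_ne (by rintro rfl; exact (hmin hx).not_gt hxρ)
  refine hu.deriv_ne_zero_of_le hm hN hfc hfb (hsub hσ)
    ((hmin ⟨hx.1.trans hx.2, le_rfl⟩).trans hρb) ?_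
  rcases hσ.1.eq_or_lt with rfl | hσ0
  · exact hu.2.2.2.2.1
  · exact (hmin.isLocalMin (Icc_mem_nhds hσ0 hσρ)).hasDerivAt_eq_zero
      (hu.hasDerivAt hσ0 (hsub hσ).2)

lemma deriv_nonpos_of_le (hm : 1 < m) (hN : 2 ≤ N) {b : ℝ} (hfc : ContinuousOn f (Ioi 0))
    (hfb : ∀ v, 0 < v → v ≤ b → f v ≤ 0) {ρ : ℝ} (hρ : 0 < ρ) (hρR : (ρ : EReal) < R)
    (hρb : u ρ ≤ b) : u' ρ ≤ 0 := by
  have hslope : Tendsto (slope u ρ) (𝓝[<] ρ) (𝓝 (u' ρ)) :=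
    (hasDerivAt_iff_tendsto_slope.1 (hu.hasDerivAt hρ hρR)).mono_left
      (nhdsWithin_mono _ fun _ hx => ne_of_lt hx)
  refine le_of_tendsto hslope ?_
  filter_upwards [Ico_mem_nhdsLT hρ] with x hx
  rw [slope_def_field]
  exact div_nonpos_of_nonneg_of_nonpos
    (sub_nonneg.2 (hu.le_of_le_of_mem_Icc hm hN hfc hfb ⟨hρ.le, hρR⟩ hρb ⟨hx.1, hx.2.le⟩))
    (sub_nonpos.2 hx.2.le)

end

section

variable (hu : IsRadialSolution N m f ⊤ u u')
include hu

lemma monotoneOn_deriv (hm : 1 < m) {r₁ : ℝ} (hr₁ : 0 < r₁) (hf : ∀ r, r₁ ≤ r → f (u r) ≤ 0)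
    (hu' : ∀ r, r₁ ≤ r → u' r ≤ 0) : MonotoneOn u' (Ici r₁) := by
  have hflux : ∀ s ∈ Ici r₁, HasDerivAt (fun s => s ^ (N - 1) * phi m (u' s))
      (-(s ^ (N - 1) * f (u s))) s :=
    fun s hs => hu.hasDerivAt_flux (hr₁.trans_le hs) (EReal.coe_lt_top s)
  have hW : MonotoneOn (fun s => s ^ (N - 1) * phi m (u' s)) (Ici r₁) := by
    refine monotoneOn_of_hasDerivWithinAt_nonneg (f' := fun s => -(s ^ (N - 1) * f (u s)))
      (convex_Ici r₁)
      (fun s hs => (hflux s hs).continuousAt.continuousWithinAt) (fun s hs => ?_) fun s hs => ?_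
    · exact (hflux s (interior_subset hs)).hasDerivWithinAt
    · rw [interior_Ici] at hs
      have := pow_pos (hr₁.trans hs) (N - 1)
      nlinarith [hf s hs.le]
  intro s hs t ht hst
  have hs0 : 0 < s ^ (N - 1) := pow_pos (hr₁.trans_le hs) _
  have hst' : s ^ (N - 1) ≤ t ^ (N - 1) := pow_le_pow_left₀ (hr₁.trans_le hs).le hst _
  have hflux_t : t ^ (N - 1) * phi m (u' t) ≤ 0 :=
    mul_nonpos_of_nonneg_of_nonpos (hs0.le.trans hst') (phi_nonpos (hu' t ht))
  rw [← (phi_strictMono hm).le_iff_le]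
  calc phi m (u' s) = s ^ (N - 1) * phi m (u' s) / s ^ (N - 1) := by field_simp
    _ ≤ t ^ (N - 1) * phi m (u' t) / s ^ (N - 1) := div_le_div_of_nonneg_right (hW hs ht hst) hs0.le
    _ ≤ t ^ (N - 1) * phi m (u' t) / t ^ (N - 1) := by
      simp only [div_eq_mul_inv]
      exact mul_le_mul_of_nonpos_left (inv_anti₀ hs0 hst') hflux_t
    _ = phi m (u' t) := by field_simp [(hs0.trans_le hst').ne']

lemma tendsto_mul_deriv_atTop (hm : 1 < m) (hN : 2 ≤ N) {b : ℝ} (hb : 0 < b)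
    (hfc : ContinuousOn f (Ioi 0)) (hfb : ∀ v, 0 < v → v ≤ b → f v ≤ 0) :
    Tendsto (fun r => r * u' r) atTop (𝓝 0) := by
  have hu0 : Tendsto u atTop (𝓝 0) := limR_top ▸ hu.tendsto_zero
  have hdom : ∀ r : ℝ, 0 ≤ r → r ∈ domR ⊤ := fun r hr => ⟨hr, EReal.coe_lt_top r⟩
  obtain ⟨r₁, hr₁⟩ := eventually_atTop.1
    ((hu0.eventually (gt_mem_nhds hb)).and (eventually_gt_atTop 0))
  have hpos : ∀ r, r₁ ≤ r → 0 < r := fun r hr => (hr₁ r hr).2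
  have hneg : ∀ r, r₁ ≤ r → u' r ≤ 0 := fun r hr =>
    hu.deriv_nonpos_of_le hm hN hfc hfb (hpos r hr) (EReal.coe_lt_top r) (hr₁ r hr).1.le
  have hmono := hu.monotoneOn_deriv hm (hpos r₁ le_rfl)
    (fun r hr => hfb _ (hu.pos (hdom r (hpos r hr).le)) (hr₁ r hr).1.le) hneg
  have hbound : ∀ t, 2 * r₁ ≤ t → -(2 * u (t / 2)) ≤ t * u' t := by
    intro t ht
    have ht0 : 0 < t / 2 := hpos _ (by linarith)
    obtain ⟨c, hc, hslope⟩ := exists_hasDerivAt_eq_slope u u' (half_lt_self (by linarith))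
      (hu.continuousOn.mono fun x hx => hdom x (ht0.le.trans hx.1))
      fun x hx => hu.hasDerivAt (ht0.trans hx.1) (EReal.coe_lt_top x)
    have hc' : u' c ≤ u' t :=
      hmono (mem_Ici.2 (by linarith [hc.1])) (mem_Ici.2 (by linarith)) hc.2.le
    rw [hslope, show t - t / 2 = t / 2 by ring, div_le_iff₀ ht0] at hc'
    nlinarith [hu.pos (hdom t (by linarith))]
  have hlower : Tendsto (fun t => -(2 * u (t / 2))) atTop (𝓝 0) := by
    simpa using ((hu0.comp (tendsto_id.atTop_div_const two_pos)).const_mul 2).neg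
  refine tendsto_of_tendsto_of_tendsto_of_le_of_le' hlower tendsto_const_nhds ?_ ?_
  · exact eventually_atTop.2 ⟨2 * r₁, hbound⟩
  · exact eventually_atTop.2 ⟨r₁, fun t ht => mul_nonpos_of_nonneg_of_nonpos (hpos t ht).le
      (hneg t ht)⟩

end

lemma tendsto_mul_deriv {R : EReal} (hu : IsRadialSolution N m f R u u') (hm : 1 < m)
    (hN : 2 ≤ N) {b : ℝ} (hb : 0 < b)
    (hfc : ContinuousOn f (Ioi 0)) (hfb : ∀ v, 0 < v → v ≤ b → f v ≤ 0) :
    Tendsto (fun r => r * u' r) (limR R) (𝓝 0) := by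
  induction R with
  | bot => exact absurd hu.1 (by simp)
  | coe x =>
    have hu' := hu.2.2.2.2.2.2.2
    rw [limR_coe] at hu' ⊢
    simpa using (tendsto_nhdsWithin_of_tendsto_nhds tendsto_id).mul hu'
  | top => rw [limR_top]; exact hu.tendsto_mul_deriv_atTop hm hN hb hfc hfb

end IsRadialSolution

/-- for `m > 1`, `2 ≤ N ≤ m`, under (H1), any radial solution satisfies
`(N−m)u(r) + (m−1) r u'(r) → 0` as `r → R`, and `(N−m)b + (m−1) r_b u'(r_b) ≤ 0`
at any point `r_b ∈ (0, R)` where `u(r_b) = b`. -/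
theorem stmt10 (N : ℕ) (m b : ℝ) (f : ℝ → ℝ) (hm : 1 < m)
    (hN2 : 2 ≤ N) (hNm : (N : ℝ) ≤ m) (hf : H1cond b f)
    (R : EReal) (u u' : ℝ → ℝ) (hu : IsRadialSolution N m f R u u') :
    Filter.Tendsto (fun r : ℝ => ((N : ℝ) - m) * u r + (m - 1) * r * u' r)
      (limR R) (nhds 0) ∧
    ∀ rb : ℝ, 0 < rb → (rb : EReal) < R → u rb = b →
      ((N : ℝ) - m) * b + (m - 1) * rb * u' rb ≤ 0 := by
  obtain ⟨hb, hfc, hfb, -⟩ := hf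
  refine ⟨?_, fun rb hrb hrbR hurb => ?_⟩
  · simpa only [mul_zero, add_zero, mul_assoc] using (hu.tendsto_zero.const_mul ((N : ℝ) - m)).add
      ((hu.tendsto_mul_deriv hm hN2 hb hfc hfb).const_mul (m - 1))
  · have h₁ : ((N : ℝ) - m) * b ≤ 0 := mul_nonpos_of_nonpos_of_nonneg (sub_nonpos.2 hNm) hb.le
    have h₂ : (m - 1) * rb * u' rb ≤ 0 := mul_nonpos_of_nonneg_of_nonpos
      (mul_nonneg (sub_nonneg.2 hm.le) hrb.le)
      (hu.deriv_nonpos_of_le hm hN2 hfc hfb hrb hrbR hurb.le)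
    linarith

end
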